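/- Let μ be a finite positive Borel measure on the unit circle ∂𝔻, let 0 < η < 1, and let {z_j}_{j=1}^∞ ⊂ 𝔻 be an η-separated sequence. There exists a constant C > 0, depending only on η, such that for every analytic function f on 𝔻 with ∫_𝔻 |f'(z)|² P_μ(z) dA(z) < ∞, one has Σ_{j=1}^∞ (1−|z_j|)² |f'(z_j)|² P_μ(z_j) ≤ C ∫_𝔻 |f'(z)|² P_μ(z) dA(z). -/

import Mathlib

/-!
Put around each `z j` the Euclidean disc `D j` of radius `c * (1 - ‖z j‖)`, with
`c = η / (2 * (2 + η))`. Since `log x ≤ x - 1`, Bergman separation `η ≤ d(z, w)` forces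
`‖φ_z(w)‖ ≥ η / (2 + η)`, and `‖φ_z(w)‖ * |1 - z̄w| = |z - w|` then makes the discs `D j`
pairwise disjoint; they all lie in `𝔻`. On `D j` Harnack's inequality for the Poisson kernel
gives `P_μ ≥ κ P_μ(z j)` with `κ = (1 - c) / (2 (1 + c)²)`, and the area sub-mean value
property of the holomorphic function `f'²` gives `π r² |f'(z j)|² ≤ ∫_{D j} |f'|² dA`, `r` being
the radius of `D j`. Hence each term of the sum is at most a
constant times `∫_{D j} |f'|² P_μ dA`, and summing over the disjoint discs gives the claim.
-/

open MeasureTheory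

noncomputable section

/-- The Poisson integral `P_μ(z) = (1/2π) ∫_{∂𝔻} (1-|z|²)/|ζ-z|² dμ(ζ)` of a measure `μ`
on the unit circle. -/
def poissonInt (μ : Measure ℂ) (z : ℂ) : ℝ :=
  (2 * Real.pi)⁻¹ * ∫ ζ, (1 - ‖z‖ ^ 2) / ‖ζ - z‖ ^ 2 ∂μ

/-- The Möbius transformation `φ_z(w) = (z - w)/(1 - z̄w)`. -/
def moebius (z w : ℂ) : ℂ := (z - w) / (1 - (starRingEnd ℂ) z * w)

/-- The Bergman metric `d(z,w) = log((1+|φ_z(w)|)/(1-|φ_z(w)|))`. -/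
def bdist (z w : ℂ) : ℝ := Real.log ((1 + ‖moebius z w‖) / (1 - ‖moebius z w‖))

open Metric Set Real

theorem norm_moebius_ge_of_le_bdist {η : ℝ} (hη : 0 < η) {z w : ℂ} (h : η ≤ bdist z w) :
    η / (2 + η) ≤ ‖moebius z w‖ := by
  set ρ := ‖moebius z w‖
  rcases le_or_gt 1 ρ with hρ1 | hρ1
  · exact (div_le_one₀ (by linarith)).2 (by linarith) |>.trans hρ1
  have hρ0 : 0 ≤ ρ := norm_nonneg _
  have hlog : η ≤ (1 + ρ) / (1 - ρ) - 1 :=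
    h.trans (Real.log_le_sub_one_of_pos (div_pos (by linarith) (by linarith)))
  rw [div_sub_one (by linarith), le_div_iff₀ (by linarith)] at hlog
  rw [div_le_iff₀ (by linarith)]
  linarith

theorem norm_moebius_mul_le_two_mul_dist {z w : ℂ} (hz : ‖z‖ ≤ 1) (hw : ‖w‖ ≤ 1) :
    ‖moebius z w‖ * ((1 - ‖z‖) + (1 - ‖w‖)) ≤ 2 * dist z w := by
  rcases eq_or_ne (1 - (starRingEnd ℂ) z * w) 0 with hd | hd
  · rw [moebius, hd, div_zero, norm_zero, zero_mul]
    positivity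
  have hd_ge : 1 - ‖z‖ * ‖w‖ ≤ ‖1 - (starRingEnd ℂ) z * w‖ := by
    simpa using norm_sub_norm_le (1 : ℂ) ((starRingEnd ℂ) z * w)
  have hsum : (1 - ‖z‖) + (1 - ‖w‖) ≤ 2 * ‖1 - (starRingEnd ℂ) z * w‖ := by
    nlinarith [mul_nonneg (norm_nonneg z) (sub_nonneg.2 hw),
      mul_nonneg (norm_nonneg w) (sub_nonneg.2 hz)]
  calc ‖moebius z w‖ * ((1 - ‖z‖) + (1 - ‖w‖))
      ≤ ‖z - w‖ / ‖1 - (starRingEnd ℂ) z * w‖ * (2 * ‖1 - (starRingEnd ℂ) z * w‖) := by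
        rw [moebius, norm_div]
        gcongr
    _ = 2 * dist z w := by
        rw [dist_eq_norm, mul_left_comm, div_mul_cancel₀ _ (norm_ne_zero_iff.2 hd)]

theorem disjoint_ball_of_le_bdist {η c : ℝ} (hη : 0 < η) (hc : c ≤ η / (2 * (2 + η))) {z w : ℂ}
    (hz : ‖z‖ ≤ 1) (hw : ‖w‖ ≤ 1) (h : η ≤ bdist z w) :
    Disjoint (ball z (c * (1 - ‖z‖))) (ball w (c * (1 - ‖w‖))) := by
  refine ball_disjoint_ball ?_
  have h2c : 2 * c ≤ η / (2 + η) := by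
    rw [le_div_iff₀ (by positivity)] at hc ⊢
    linarith
  have hsum : 0 ≤ (1 - ‖z‖) + (1 - ‖w‖) := by linarith
  have key := (mul_le_mul_of_nonneg_right (norm_moebius_ge_of_le_bdist hη h) hsum).trans
    (norm_moebius_mul_le_two_mul_dist hz hw)
  nlinarith [mul_le_mul_of_nonneg_right h2c hsum]

theorem ball_mul_one_sub_norm_subset_ball_zero_one {c : ℝ} (hc : c ≤ 1) {z : ℂ}
    (hz : ‖z‖ ≤ 1) : ball z (c * (1 - ‖z‖)) ⊆ ball 0 1 := fun w hw => by
  have hwz : ‖w‖ - ‖z‖ ≤ dist w z := by simpa [dist_eq_norm] using norm_sub_norm_le w z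
  rw [mem_ball_zero_iff]
  nlinarith [mem_ball.1 hw]

theorem ae_norm_eq_one {μ : Measure ℂ} (hμ : μ (sphere (0 : ℂ) 1)ᶜ = 0) : ∀ᵐ ζ ∂μ, ‖ζ‖ = 1 :=
  (measure_eq_zero_iff_ae_notMem.1 hμ).mono fun ζ hζ => by simpa using hζ

theorem integrable_poissonKernel {μ : Measure ℂ} [IsFiniteMeasure μ]
    (hμ : μ (sphere (0 : ℂ) 1)ᶜ = 0) {z : ℂ} (hz : ‖z‖ < 1) :
    Integrable (fun ζ => (1 - ‖z‖ ^ 2) / ‖ζ - z‖ ^ 2) μ := by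
  refine .of_bound (measurable_const.div (by fun_prop)).aestronglyMeasurable
    ((1 - ‖z‖ ^ 2) / (1 - ‖z‖) ^ 2) ?_
  filter_upwards [ae_norm_eq_one hμ] with ζ hζ
  have hdist : 1 - ‖z‖ ≤ ‖ζ - z‖ := by simpa [hζ] using norm_sub_norm_le ζ z
  have hnum : 0 ≤ 1 - ‖z‖ ^ 2 := by nlinarith [norm_nonneg z]
  rw [Real.norm_of_nonneg (by positivity)]
  gcongr

theorem poissonKernel_harnack {c : ℝ} (hc : c ≤ 1) {z w ζ : ℂ} (hz : ‖z‖ ≤ 1)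
    (hw : w ∈ ball z (c * (1 - ‖z‖))) (hζ : ‖ζ‖ = 1) :
    (1 - c) / (2 * (1 + c) ^ 2) * ((1 - ‖z‖ ^ 2) / ‖ζ - z‖ ^ 2)
      ≤ (1 - ‖w‖ ^ 2) / ‖ζ - w‖ ^ 2 := by
  have hwz : ‖w - z‖ < c * (1 - ‖z‖) := by rwa [mem_ball, dist_eq_norm] at hw
  have hw1 := mem_ball_zero_iff.1 (ball_mul_one_sub_norm_subset_ball_zero_one hc hz hw)
  have hc0 : 0 < c := pos_of_mul_pos_left ((norm_nonneg _).trans_lt hwz) (by linarith)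
  have hζz : 1 - ‖z‖ ≤ ‖ζ - z‖ := by simpa [hζ] using norm_sub_norm_le ζ z
  have hζw : 1 - ‖w‖ ≤ ‖ζ - w‖ := by simpa [hζ] using norm_sub_norm_le ζ w
  have hden : ‖ζ - w‖ ≤ (1 + c) * ‖ζ - z‖ := by
    have := norm_sub_le_norm_sub_add_norm_sub ζ z w
    rw [norm_sub_rev z w] at this
    nlinarith
  have hnum : (1 - c) / 2 * (1 - ‖z‖ ^ 2) ≤ 1 - ‖w‖ ^ 2 := by
    have : ‖w‖ - ‖z‖ ≤ ‖w - z‖ := norm_sub_norm_le w z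
    nlinarith [norm_nonneg z, norm_nonneg w]
  calc (1 - c) / (2 * (1 + c) ^ 2) * ((1 - ‖z‖ ^ 2) / ‖ζ - z‖ ^ 2)
      = (1 - c) / 2 * (1 - ‖z‖ ^ 2) / ((1 + c) ^ 2 * ‖ζ - z‖ ^ 2) := by
        field_simp
    _ ≤ (1 - ‖w‖ ^ 2) / ‖ζ - w‖ ^ 2 := by
        refine div_le_div₀ (by nlinarith [norm_nonneg w]) hnum (by nlinarith) ?_
        rw [← mul_pow]
        exact pow_le_pow_left₀ (by linarith) hden 2

theorem poissonInt_nonneg (μ : Measure ℂ) {z : ℂ} (hz : ‖z‖ ≤ 1) : 0 ≤ poissonInt μ z := by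
  have : 0 ≤ 1 - ‖z‖ ^ 2 := by nlinarith [norm_nonneg z]
  unfold poissonInt
  positivity

theorem poissonInt_harnack {μ : Measure ℂ} [IsFiniteMeasure μ]
    (hμ : μ (sphere (0 : ℂ) 1)ᶜ = 0) {c : ℝ} (hc : c ≤ 1) {z w : ℂ} (hz : ‖z‖ ≤ 1)
    (hw : w ∈ ball z (c * (1 - ‖z‖))) :
    (1 - c) / (2 * (1 + c) ^ 2) * poissonInt μ z ≤ poissonInt μ w := by
  rw [poissonInt, poissonInt, mul_left_comm, ← integral_const_mul]
  refine mul_le_mul_of_nonneg_left (integral_mono_of_nonneg (.of_forall fun ζ => ?_)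
    (integrable_poissonKernel hμ (mem_ball_zero_iff.1
      (ball_mul_one_sub_norm_subset_ball_zero_one hc hz hw))) ?_) (by positivity)
  · have : 0 ≤ 1 - ‖z‖ ^ 2 := by nlinarith [norm_nonneg z]
    have : 0 ≤ 1 - c := by linarith
    positivity
  · filter_upwards [ae_norm_eq_one hμ] with ζ hζ
    exact poissonKernel_harnack hc hz hw hζ

theorem DiffContOnCl.norm_le_circleAverage_norm {E : Type*} [NormedAddCommGroup E]
    [NormedSpace ℂ E] [CompleteSpace E] {F : ℂ → E} {c : ℂ} {R : ℝ}
    (hF : DiffContOnCl ℂ F (ball c |R|)) : ‖F c‖ ≤ Real.circleAverage (‖F ·‖) c R := by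
  rw [← hF.circleAverage, circleAverage_def, circleAverage_def, norm_smul,
    Real.norm_of_nonneg (by positivity), smul_eq_mul]
  gcongr
  exact intervalIntegral.norm_integral_le_integral_norm (by positivity)

theorem DifferentiableOn.ofReal_two_pi_mul_norm_le_lintegral_circleMap {E : Type*}
    [NormedAddCommGroup E] [NormedSpace ℂ E] [CompleteSpace E] {F : ℂ → E} {c : ℂ} {R : ℝ}
    (hF : DifferentiableOn ℂ F (closedBall c R)) (hR : 0 ≤ R) :
    ENNReal.ofReal (2 * π * ‖F c‖) ≤ ∫⁻ θ in Ioo (-π) π, ENNReal.ofReal ‖F (circleMap c R θ)‖ := by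
  have hcont : Continuous fun θ => ‖F (circleMap c R θ)‖ :=
    (hF.continuousOn.comp_continuous (continuous_circleMap c R)
      fun θ => circleMap_mem_closedBall c hR θ).norm
  have hmean : 2 * π * ‖F c‖ ≤ ∫ θ in Ioo (-π) π, ‖F (circleMap c R θ)‖ := by
    have hperiodic : Function.Periodic (fun θ => ‖F (circleMap c R θ)‖) (2 * π) :=
      fun θ => by simp only [periodic_circleMap c R θ]
    have hshift := hperiodic.intervalIntegral_add_eq 0 (-π)
    rw [zero_add, show -π + 2 * π = π by ring] at hshift
    rw [← integral_Ioc_eq_integral_Ioo, ← intervalIntegral.integral_of_le (by linarith [pi_pos]),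
      ← hshift, ← le_inv_mul_iff₀ (by positivity)]
    have := DiffContOnCl.norm_le_circleAverage_norm (R := R)
      (hF.diffContOnCl_ball (by rw [abs_of_nonneg hR]))
    rwa [circleAverage_def, smul_eq_mul] at this
  exact (ENNReal.ofReal_le_ofReal hmean).trans_eq (ofReal_integral_eq_lintegral_ofReal
    (hcont.integrableOn_Icc.mono_set Ioo_subset_Icc_self) (.of_forall fun _ => norm_nonneg _))

theorem lintegral_polar_le_setLIntegral_ball {g : ℂ → ENNReal} {c : ℂ} {r : ℝ}
    (hg : ContinuousOn g (ball c r)) :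
    ∫⁻ ρ in Ioo 0 r, ∫⁻ θ in Ioo (-π) π, ENNReal.ofReal ρ * g (circleMap c ρ θ)
      ≤ ∫⁻ w in ball c r, g w := by
  set S : Set (ℝ × ℝ) := Ioo 0 r ×ˢ Ioo (-π) π
  have hS : MeasurableSet S := measurableSet_Ioo.prod measurableSet_Ioo
  have hcircle_mem : ∀ p ∈ S, circleMap c p.1 p.2 ∈ ball c r := fun p hp =>
    mem_ball.2 ((mem_sphere.1 (circleMap_mem_sphere c hp.1.1.le p.2)).trans_lt hp.1.2)
  have hpolar : ∀ p ∈ S, ENNReal.ofReal p.1 * g (circleMap c p.1 p.2)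
      = ENNReal.ofReal p.1 • (ball c r).indicator g (c + Complex.polarCoord.symm p) := by
    intro p hp
    have : c + Complex.polarCoord.symm p = circleMap c p.1 p.2 := by
      simp [circleMap, Complex.exp_mul_I, Complex.ofReal_cos, Complex.ofReal_sin]
    rw [this, indicator_of_mem (hcircle_mem p hp), smul_eq_mul]
  have hmeas : AEMeasurable (fun p : ℝ × ℝ => ENNReal.ofReal p.1 * g (circleMap c p.1 p.2))
      (volume.restrict S) :=
    (ENNReal.measurable_ofReal.comp measurable_fst).aemeasurable.mul
      ((hg.comp (by unfold circleMap; fun_prop) hcircle_mem).aemeasurable hS)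
  calc ∫⁻ ρ in Ioo 0 r, ∫⁻ θ in Ioo (-π) π, ENNReal.ofReal ρ * g (circleMap c ρ θ)
      = ∫⁻ p in S, ENNReal.ofReal p.1 * g (circleMap c p.1 p.2) := by
        rw [Measure.volume_eq_prod, ← Measure.prod_restrict] at hmeas ⊢
        rw [lintegral_prod _ hmeas]
    _ = ∫⁻ p in S, ENNReal.ofReal p.1 • (ball c r).indicator g (c + Complex.polarCoord.symm p) :=
        setLIntegral_congr_fun hS hpolar
    _ ≤ ∫⁻ p in polarCoord.target,
          ENNReal.ofReal p.1 • (ball c r).indicator g (c + Complex.polarCoord.symm p) :=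
        lintegral_mono_set (prod_mono Ioo_subset_Ioi_self subset_rfl)
    _ = ∫⁻ w in ball c r, g w := by
        rw [Complex.lintegral_comp_polarCoord_symm (fun u => (ball c r).indicator g (c + u)),
          lintegral_add_left_eq_self, lintegral_indicator measurableSet_ball]

theorem DifferentiableOn.ofReal_pi_mul_sq_mul_norm_le_setLIntegral {E : Type*}
    [NormedAddCommGroup E] [NormedSpace ℂ E] [CompleteSpace E] {F : ℂ → E} {c : ℂ} {r : ℝ}
    (hF : DifferentiableOn ℂ F (ball c r)) (hr : 0 ≤ r) :
    ENNReal.ofReal (π * r ^ 2 * ‖F c‖) ≤ ∫⁻ w in ball c r, ENNReal.ofReal ‖F w‖ := by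
  have hradial : ∀ ρ ∈ Ioo 0 r, ENNReal.ofReal (2 * π * ‖F c‖ * ρ)
      ≤ ∫⁻ θ in Ioo (-π) π, ENNReal.ofReal ρ * ENNReal.ofReal ‖F (circleMap c ρ θ)‖ := by
    intro ρ hρ
    rw [lintegral_const_mul' _ _ ENNReal.ofReal_ne_top, mul_comm, ENNReal.ofReal_mul hρ.1.le]
    exact mul_le_mul_right ((hF.mono (closedBall_subset_ball hρ.2))
      |>.ofReal_two_pi_mul_norm_le_lintegral_circleMap hρ.1.le) _
  calc ENNReal.ofReal (π * r ^ 2 * ‖F c‖)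
      = ENNReal.ofReal (∫ ρ in Ioo 0 r, 2 * π * ‖F c‖ * ρ) := by
        rw [integral_const_mul, ← integral_Ioc_eq_integral_Ioo,
          ← intervalIntegral.integral_of_le hr, integral_id]
        ring_nf
    _ = ∫⁻ ρ in Ioo 0 r, ENNReal.ofReal (2 * π * ‖F c‖ * ρ) := by
        refine ofReal_integral_eq_lintegral_ofReal
          ((continuous_const.mul continuous_id).integrableOn_Icc.mono_set Ioo_subset_Icc_self) ?_
        filter_upwards [ae_restrict_mem measurableSet_Ioo] with ρ hρ
        have := hρ.1.le
        positivity
    _ ≤ ∫⁻ ρ in Ioo 0 r, ∫⁻ θ in Ioo (-π) π,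
          ENNReal.ofReal ρ * ENNReal.ofReal ‖F (circleMap c ρ θ)‖ :=
        setLIntegral_mono' measurableSet_Ioo hradial
    _ ≤ ∫⁻ w in ball c r, ENNReal.ofReal ‖F w‖ :=
        lintegral_polar_le_setLIntegral_ball
          (ENNReal.continuous_ofReal.comp_continuousOn hF.continuousOn.norm)

theorem ofReal_sq_mul_poissonInt_le_setLIntegral_ball {μ : Measure ℂ} [IsFiniteMeasure μ]
    (hμ : μ (sphere (0 : ℂ) 1)ᶜ = 0) {g : ℂ → ℂ} (hg : DifferentiableOn ℂ g (ball 0 1))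
    {c : ℝ} (hc0 : 0 < c) (hc1 : c < 1) {z : ℂ} (hz : ‖z‖ ≤ 1) :
    ENNReal.ofReal ((1 - ‖z‖) ^ 2 * ‖g z‖ ^ 2 * poissonInt μ z)
      ≤ ENNReal.ofReal (((1 - c) / (2 * (1 + c) ^ 2) * (π * c ^ 2))⁻¹) *
        ∫⁻ w in ball z (c * (1 - ‖z‖)), ENNReal.ofReal (‖g w‖ ^ 2 * poissonInt μ w) := by
  set κ := (1 - c) / (2 * (1 + c) ^ 2)
  set r := c * (1 - ‖z‖)
  have hκ : 0 < κ := div_pos (by linarith) (by positivity)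
  have hr : 0 ≤ r := mul_nonneg hc0.le (by linarith)
  have hPz := poissonInt_nonneg μ hz
  have hsubset : ball z r ⊆ ball 0 1 := ball_mul_one_sub_norm_subset_ball_zero_one hc1.le hz
  have hmean : ENNReal.ofReal (π * r ^ 2 * ‖g z ^ 2‖)
      ≤ ∫⁻ w in ball z r, ENNReal.ofReal ‖g w ^ 2‖ :=
    ((hg.mono hsubset).pow 2).ofReal_pi_mul_sq_mul_norm_le_setLIntegral hr
  have hharnack : ENNReal.ofReal (κ * poissonInt μ z) * ∫⁻ w in ball z r, ENNReal.ofReal ‖g w ^ 2‖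
      ≤ ∫⁻ w in ball z r, ENNReal.ofReal (‖g w‖ ^ 2 * poissonInt μ w) := by
    rw [← lintegral_const_mul' _ _ ENNReal.ofReal_ne_top]
    refine setLIntegral_mono' measurableSet_ball fun w hw => ?_
    rw [← ENNReal.ofReal_mul (by positivity), norm_pow, mul_comm]
    gcongr
    exact poissonInt_harnack hμ hc1.le hz hw
  calc ENNReal.ofReal ((1 - ‖z‖) ^ 2 * ‖g z‖ ^ 2 * poissonInt μ z)
      = ENNReal.ofReal ((κ * (π * c ^ 2))⁻¹) *
          (ENNReal.ofReal (κ * poissonInt μ z) * ENNReal.ofReal (π * r ^ 2 * ‖g z ^ 2‖)) := by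
        rw [← ENNReal.ofReal_mul (by positivity), ← ENNReal.ofReal_mul (by positivity), norm_pow]
        congr 1
        field_simp
        ring
    _ ≤ ENNReal.ofReal ((κ * (π * c ^ 2))⁻¹) *
          ∫⁻ w in ball z r, ENNReal.ofReal (‖g w‖ ^ 2 * poissonInt μ w) := by
        gcongr
        exact (mul_le_mul_right hmean _).trans hharnack

theorem stmt15_general (η : ℝ) (hη0 : 0 < η) :
    ∃ C : ℝ, 0 < C ∧
      ∀ μ : Measure ℂ, IsFiniteMeasure μ → μ ((Metric.sphere (0:ℂ) 1)ᶜ) = 0 →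
      ∀ z : ℕ → ℂ, (∀ j, z j ∈ Metric.ball (0:ℂ) 1) →
        (∀ j k, j ≠ k → η ≤ bdist (z j) (z k)) →
      ∀ f : ℂ → ℂ, DifferentiableOn ℂ f (Metric.ball (0:ℂ) 1) →
        (∫⁻ w in Metric.ball (0:ℂ) 1,
            ENNReal.ofReal (‖deriv f w‖ ^ 2 * poissonInt μ w)) < ⊤ →
        (∑' j, ENNReal.ofReal ((1 - ‖z j‖) ^ 2 * ‖deriv f (z j)‖ ^ 2 * poissonInt μ (z j)))
          ≤ ENNReal.ofReal C *
            ∫⁻ w in Metric.ball (0:ℂ) 1,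
              ENNReal.ofReal (‖deriv f w‖ ^ 2 * poissonInt μ w) := by
  set c := η / (2 * (2 + η))
  have hc0 : 0 < c := by positivity
  have hc1 : c < 1 := by rw [div_lt_one (by positivity)]; linarith
  refine ⟨((1 - c) / (2 * (1 + c) ^ 2) * (π * c ^ 2))⁻¹,
    inv_pos.2 (mul_pos (div_pos (by linarith) (by positivity)) (by positivity)), ?_⟩
  intro μ _ hμ z hz hsep f hf _
  have hz1 : ∀ j, ‖z j‖ ≤ 1 := fun j => (mem_ball_zero_iff.1 (hz j)).le
  have hdisj : Pairwise (Function.onFun Disjoint fun j => ball (z j) (c * (1 - ‖z j‖))) :=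
    fun j k hjk => disjoint_ball_of_le_bdist hη0 le_rfl (hz1 j) (hz1 k) (hsep j k hjk)
  calc _ ≤ ∑' j, ENNReal.ofReal (((1 - c) / (2 * (1 + c) ^ 2) * (π * c ^ 2))⁻¹) *
          ∫⁻ w in ball (z j) (c * (1 - ‖z j‖)), ENNReal.ofReal (‖deriv f w‖ ^ 2 * poissonInt μ w) :=
        ENNReal.tsum_le_tsum fun j =>
          ofReal_sq_mul_poissonInt_le_setLIntegral_ball hμ (hf.deriv isOpen_ball) hc0 hc1 (hz1 j)
    _ ≤ _ := by
        rw [ENNReal.tsum_mul_left, ← lintegral_iUnion (fun _ => measurableSet_ball) hdisj]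
        gcongr
        exact iUnion_subset fun j => ball_mul_one_sub_norm_subset_ball_zero_one hc1.le (hz1 j)

theorem stmt15 (η : ℝ) (hη0 : 0 < η) (hη1 : η < 1) :
    ∃ C : ℝ, 0 < C ∧
      ∀ μ : Measure ℂ, IsFiniteMeasure μ → μ ((Metric.sphere (0:ℂ) 1)ᶜ) = 0 →
      ∀ z : ℕ → ℂ, (∀ j, z j ∈ Metric.ball (0:ℂ) 1) →
        (∀ j k, j ≠ k → η ≤ bdist (z j) (z k)) →
      ∀ f : ℂ → ℂ, DifferentiableOn ℂ f (Metric.ball (0:ℂ) 1) →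
        (∫⁻ w in Metric.ball (0:ℂ) 1,
            ENNReal.ofReal (‖deriv f w‖ ^ 2 * poissonInt μ w)) < ⊤ →
        (∑' j, ENNReal.ofReal ((1 - ‖z j‖) ^ 2 * ‖deriv f (z j)‖ ^ 2 * poissonInt μ (z j)))
          ≤ ENNReal.ofReal C *
            ∫⁻ w in Metric.ball (0:ℂ) 1,
              ENNReal.ofReal (‖deriv f w‖ ^ 2 * poissonInt μ w) :=
  stmt15_general η hη0
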